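/- For every D ⊆ E admitting a d-flow and every e ∈ E such that D contains either both or neither of e and rev e (i.e. |D ∩ {e, rev e}| ≠ 1), it holds that ψ_e(φ_e(D)) = D. -/

import Mathlib

open Finset

section Defs

variable {V : Type*}

/-- Reversal of a directed edge. -/
def drev (e : V × V) : V × V := (e.2, e.1)

/-- `K` is a subgraph of the (symmetric) edge set `E`: it contains either both or
neither of `e` and `drev e` for every `e ∈ E`. -/
def IsSubgraph [DecidableEq V] (E K : Finset (V × V)) : Prop :=
  K ⊆ E ∧ ∀ e ∈ E, (e ∈ K ↔ drev e ∈ K)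

/-- `L` is an orientation of the (symmetric) edge set `E`: it contains exactly one of
`e` and `drev e` for every `e ∈ E`. -/
def IsOrientation [DecidableEq V] (E L : Finset (V × V)) : Prop :=
  L ⊆ E ∧ ∀ e ∈ E, (e ∈ L ↔ drev e ∉ L)

variable [Fintype V] [DecidableEq V]

/-- `f` is a `d`-flow on the directed subgraph `D` of the graph with edge set `E`. -/
def IsFlow (E D : Finset (V × V)) (d : V → ℤ) (f : V × V → ℝ) : Prop :=
  (∀ e ∈ E, 0 ≤ f e ∧ f e ≤ 1) ∧
  (∀ e, e ∉ D → f e = 0) ∧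
  ∀ u : V,
    ((Finset.univ.filter (fun v : V => (u, v) ∈ E)).sum fun v => f (u, v)) -
      ((Finset.univ.filter (fun v : V => (v, u) ∈ E)).sum fun v => f (v, u)) = (d u : ℝ)

/-- A `d`-flow exists on `D`. -/
def AdmitsFlow (E D : Finset (V × V)) (d : V → ℤ) : Prop :=
  ∃ f : V × V → ℝ, IsFlow E D d f

/-- The `w`-cost of a flow `f`. -/
def flowCost (E : Finset (V × V)) (w : V × V → ℝ) (f : V × V → ℝ) : ℝ :=
  ∑ e ∈ E, w e * f e

/-- `f` is a min-cost `d`-flow on `D`. -/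
def IsMinCostFlow (E D : Finset (V × V)) (d : V → ℤ) (w : V × V → ℝ)
    (f : V × V → ℝ) : Prop :=
  IsFlow E D d f ∧ ∀ g : V × V → ℝ, IsFlow E D d g → flowCost E w f ≤ flowCost E w g

/-- The `{0,1}`-valued function determined by a set of edges. -/
def ind (S : Finset (V × V)) : V × V → ℝ := fun e => if e ∈ S then 1 else 0

/-- `A` assigns to every flow-admitting `D ⊆ E` the (edge set of the) unique,
`{0,1}`-valued min-cost `d`-flow on `D`. -/
def GoodA (E : Finset (V × V)) (d : V → ℤ) (w : V × V → ℝ)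
    (A : Finset (V × V) → Finset (V × V)) : Prop :=
  ∀ D : Finset (V × V), D ⊆ E → AdmitsFlow E D d →
    IsMinCostFlow E D d w (ind (A D)) ∧
    ∀ f : V × V → ℝ, IsMinCostFlow E D d w f → f = ind (A D)

/-- `A(D) = A(D')`: both `D` and `D'` admit a `d`-flow and their unique min-cost
`d`-flows coincide.  (If one of them admits no `d`-flow this is false.) -/
def AEq (E : Finset (V × V)) (d : V → ℤ) (A : Finset (V × V) → Finset (V × V))
    (D D' : Finset (V × V)) : Prop :=
  AdmitsFlow E D d ∧ AdmitsFlow E D' d ∧ A D = A D'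

/-- `D ⊕ e := (D ∪ {e}) \ {drev e}`. -/
def oplus (D : Finset (V × V)) (e : V × V) : Finset (V × V) := insert e D \ {drev e}

/-- `D + e := D ∪ {e, drev e}`. -/
def padd (D : Finset (V × V)) (e : V × V) : Finset (V × V) := D ∪ {e, drev e}

/-- `D − e := D \ {e, drev e}`. -/
def psub (D : Finset (V × V)) (e : V × V) : Finset (V × V) := D \ {e, drev e}

/-- The representative of `{e, drev e}` lying in the reference orientation `E'`. -/
def chi (E' : Finset (V × V)) (e : V × V) : V × V := if e ∈ E' then e else drev e

/-- The map `φ_e`. -/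
noncomputable def phiE (E : Finset (V × V)) (d : V → ℤ)
    (A : Finset (V × V) → Finset (V × V)) (E' : Finset (V × V))
    (e : V × V) (D : Finset (V × V)) : Finset (V × V) := by
  classical
  exact
    if ¬ AEq E d A D (oplus D e) then oplus D (drev e)
    else if ¬ AEq E d A D (oplus D (drev e)) then oplus D e
    else if e ∈ D then oplus D (chi E' e) else oplus D (drev (chi E' e))

/-- The map `ψ_e`. -/
noncomputable def psiE (E : Finset (V × V)) (d : V → ℤ)
    (A : Finset (V × V) → Finset (V × V)) (E' : Finset (V × V))
    (e : V × V) (D : Finset (V × V)) : Finset (V × V) := by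
  classical
  exact
    if ¬ AEq E d A D (padd D e) then psub D e
    else if ¬ AEq E d A D (psub D e) then padd D e
    else if chi E' e ∈ D then padd D e else psub D e

end Defs

/-!
Two exchange arguments on the min-cost flows drive the proof. Cancelling one unit of flow
around the 2-cycle `e, drev e` lowers the cost, so `A D` never uses both `e` and `drev e`. If `D`
avoids the pair and adding `e` to `D` changes the optimum, then `A (D + e)` uses `e`: otherwise
averaging `A (D ∪ {e})` with `A (D + e)` and cancelling the half unit around the 2-cycle gives a
flow on `D` cheaper than `A D`. Together with the fact that deleting edges unused by `A D` does
not change the optimum, this pins down which branch `φ_e` and then `ψ_e` take, and `ψ_e` always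
undoes the single edge change made by `φ_e`.
-/

section Edges

variable {V : Type*}

@[simp] lemma drev_drev (e : V × V) : drev (drev e) = e := rfl

lemma drev_eq_iff {x y : V × V} : drev x = y ↔ x = drev y :=
  ⟨fun h => h ▸ rfl, fun h => h ▸ rfl⟩

lemma drev_ne_self {e : V × V} (h : e.1 ≠ e.2) : drev e ≠ e :=
  fun heq => h (congrArg Prod.snd heq)

variable [DecidableEq V] {D S : Finset (V × V)} {e x : V × V}

lemma exists_chi_eq_drev (E' : Finset (V × V)) (e : V × V) :
    ∃ y, (y = e ∨ y = drev e) ∧ chi E' e = drev y := by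
  unfold chi
  split_ifs
  exacts [⟨drev e, .inr rfl, rfl⟩, ⟨e, .inl rfl, rfl⟩]

lemma oplus_of_mem (h : e ∈ D) : oplus D e = D.erase (drev e) := by
  rw [oplus, insert_eq_of_mem h, sdiff_singleton_eq_erase]

lemma oplus_of_notMem (h : drev e ∉ D) (hne : drev e ≠ e) : oplus D e = insert e D := by
  rw [oplus, sdiff_singleton_eq_erase, erase_eq_of_notMem]
  simp [h, hne]

lemma padd_eq_insert_insert : padd D e = insert e (insert (drev e) D) := by
  ext y
  simp only [padd, mem_union, mem_insert, mem_singleton]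
  tauto

lemma padd_drev : padd D (drev e) = padd D e := by
  rw [padd, drev_drev, pair_comm, ← padd]

lemma padd_eq_self (he : e ∈ D) (he' : drev e ∈ D) : padd D e = D :=
  union_eq_left.2 (insert_subset he (singleton_subset_iff.2 he'))

lemma psub_eq_self (he : e ∉ D) (he' : drev e ∉ D) : psub D e = D :=
  sdiff_eq_self_of_disjoint (disjoint_left.2 fun y hy hy' => by
    rcases mem_insert.1 hy' with rfl | hy'
    exacts [he hy, he' (mem_singleton.1 hy' ▸ hy)])

lemma psub_padd : psub (padd D e) e = psub D e := by
  ext y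
  simp only [psub, padd, mem_sdiff, mem_union]
  tauto

lemma padd_erase (hx : x = e ∨ x = drev e) : padd (D.erase x) e = padd D e := by
  ext y
  rcases hx with rfl | rfl <;> simp only [padd, mem_union, mem_erase, mem_insert, mem_singleton] <;>
    tauto

lemma psub_erase (hx : x = e ∨ x = drev e) : psub (D.erase x) e = psub D e := by
  ext y
  rcases hx with rfl | rfl <;> simp only [psub, mem_sdiff, mem_erase, mem_insert, mem_singleton] <;>
    tauto

lemma padd_insert (hx : x = e ∨ x = drev e) : padd (insert x D) e = padd D e := by
  ext y
  simp only [padd, mem_union, mem_insert, mem_singleton]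
  rcases hx with rfl | rfl <;> tauto

lemma psub_insert (hx : x = e ∨ x = drev e) : psub (insert x D) e = psub D e := by
  ext y
  simp only [psub, mem_sdiff, mem_insert, mem_singleton]
  rcases hx with rfl | rfl <;> tauto

lemma insert_subset_padd (hx : x = e ∨ x = drev e) : insert x D ⊆ padd D e :=
  insert_subset (by rcases hx with rfl | rfl <;> simp [padd]) subset_union_left

lemma padd_subset (hD : D ⊆ S) (he : e ∈ S) (he' : drev e ∈ S) : padd D e ⊆ S :=
  union_subset hD (insert_subset he (singleton_subset_iff.2 he'))

end Edges

section Costs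

variable {V : Type*} {E S : Finset (V × V)} {w : V × V → ℝ} {f g : V × V → ℝ}

lemma flowCost_add : flowCost E w (f + g) = flowCost E w f + flowCost E w g := by
  simp only [flowCost, Pi.add_apply, mul_add, sum_add_distrib]

lemma flowCost_sub : flowCost E w (f - g) = flowCost E w f - flowCost E w g := by
  simp only [flowCost, Pi.sub_apply, mul_sub, sum_sub_distrib]

lemma flowCost_smul (c : ℝ) : flowCost E w (c • f) = c * flowCost E w f := by
  simp only [flowCost, Pi.smul_apply, smul_eq_mul, mul_sum, mul_left_comm]

variable [DecidableEq V]

lemma flowCost_ind (hS : S ⊆ E) : flowCost E w (ind S) = ∑ x ∈ S, w x := by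
  simp only [flowCost, ind, mul_ite, mul_one, mul_zero]
  rw [sum_ite_mem, inter_eq_right.2 hS]

lemma flowCost_sub_smul_ind_pair {e : V × V} (he : e ∈ E) (he' : drev e ∈ E) (hne : drev e ≠ e)
    (t : ℝ) :
    flowCost E w (f - t • ind {e, drev e}) = flowCost E w f - t * (w e + w (drev e)) := by
  rw [flowCost_sub, flowCost_smul, flowCost_ind (insert_subset he (singleton_subset_iff.2 he')),
    sum_pair hne.symm]

lemma ind_injective : Function.Injective (ind : Finset (V × V) → V × V → ℝ) := by
  intro S T h
  ext x
  have hx := congrFun h x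
  by_cases hS : x ∈ S <;> by_cases hT : x ∈ T <;> simp_all [ind]

lemma ind_pair_drev (e x : V × V) : ind {e, drev e} (drev x) = ind {e, drev e} x := by
  simp only [ind, mem_insert, mem_singleton, drev_eq_iff, drev_drev, or_comm]

end Costs

section Flows

variable {V : Type*} [Fintype V] [DecidableEq V] {E D D' : Finset (V × V)} {d : V → ℤ}
  {f g : V × V → ℝ} {e : V × V}

def netOut (E : Finset (V × V)) (f : V × V → ℝ) (u : V) : ℝ :=
  (∑ v ∈ univ.filter (fun v => (u, v) ∈ E), f (u, v)) -
    ∑ v ∈ univ.filter (fun v => (v, u) ∈ E), f (v, u)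

lemma netOut_add (u : V) : netOut E (f + g) u = netOut E f u + netOut E g u := by
  simp only [netOut, Pi.add_apply, sum_add_distrib]
  ring

lemma netOut_sub (u : V) : netOut E (f - g) u = netOut E f u - netOut E g u := by
  simp only [netOut, Pi.sub_apply, sum_sub_distrib]
  ring

lemma netOut_smul (c : ℝ) (u : V) : netOut E (c • f) u = c * netOut E f u := by
  simp only [netOut, Pi.smul_apply, smul_eq_mul, ← mul_sum]
  ring

lemma netOut_eq_zero_of_symm (hE : ∀ x, x ∈ E ↔ drev x ∈ E) (hf : ∀ x, f (drev x) = f x)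
    (u : V) : netOut E f u = 0 :=
  sub_eq_zero.2 <| sum_congr (filter_congr fun v _ => hE (u, v)) fun v _ => (hf (u, v)).symm

lemma IsFlow.netOut_eq (hf : IsFlow E D d f) (u : V) : netOut E f u = d u := hf.2.2 u

lemma IsFlow.mono (hf : IsFlow E D d f) (h : D ⊆ D') : IsFlow E D' d f :=
  ⟨hf.1, fun x hx => hf.2.1 x fun hxD => hx (h hxD), hf.2.2⟩

lemma AdmitsFlow.mono (hD : AdmitsFlow E D d) (h : D ⊆ D') : AdmitsFlow E D' d :=
  hD.imp fun _ hf => hf.mono h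

lemma IsFlow.midpoint (hf : IsFlow E D d f) (hg : IsFlow E D d g) :
    IsFlow E D d ((1 / 2 : ℝ) • (f + g)) := by
  refine ⟨fun x hx => ?_, fun x hx => ?_, fun u => ?_⟩
  · obtain ⟨hf0, hf1⟩ := hf.1 x hx
    obtain ⟨hg0, hg1⟩ := hg.1 x hx
    simp only [Pi.smul_apply, Pi.add_apply, smul_eq_mul]
    constructor <;> linarith
  · simp [hf.2.1 x hx, hg.2.1 x hx]
  · change netOut E _ u = d u
    rw [netOut_smul, netOut_add, hf.netOut_eq, hg.netOut_eq]
    ring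

lemma IsFlow.sub_smul_ind_pair (hE : ∀ x, x ∈ E ↔ drev x ∈ E) (hf : IsFlow E D d f) {t : ℝ}
    (hfe : f e = t) (hfe' : f (drev e) = t) :
    IsFlow E (psub D e) d (f - t • ind {e, drev e}) := by
  have hval : ∀ x,
      (f - t • ind {e, drev e}) x = if x ∈ ({e, drev e} : Finset _) then 0 else f x := by
    intro x
    by_cases hx : x ∈ ({e, drev e} : Finset _)
    · rcases mem_insert.1 hx with rfl | hx'
      · simp [ind, hfe]
      · rw [mem_singleton.1 hx']
        simp [ind, hfe']
    · simp [ind, hx]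
  refine ⟨fun x hx => ?_, fun x hx => ?_, fun u => ?_⟩
  · rw [hval]
    split_ifs
    exacts [⟨le_rfl, zero_le_one⟩, hf.1 x hx]
  · rw [hval]
    split_ifs with hpair
    · rfl
    · exact hf.2.1 x fun hxD => hx (mem_sdiff.2 ⟨hxD, hpair⟩)
  · change netOut E _ u = d u
    rw [netOut_sub, netOut_smul, netOut_eq_zero_of_symm hE (ind_pair_drev e), hf.netOut_eq]
    ring

end Flows

section MinCostFlows

variable {V : Type*} [Fintype V] [DecidableEq V] {E D D' D'' : Finset (V × V)} {d : V → ℤ}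
  {w : V × V → ℝ} {A : Finset (V × V) → Finset (V × V)} {e x : V × V}

lemma AEq.symm (h : AEq E d A D D') : AEq E d A D' D := ⟨h.2.1, h.1, h.2.2.symm⟩

lemma AEq.trans (h : AEq E d A D D') (h' : AEq E d A D' D'') : AEq E d A D D'' :=
  ⟨h.1, h'.2.1, h.2.2.trans h'.2.2⟩

namespace GoodA

lemma isFlow (hA : GoodA E d w A) (hD : D ⊆ E) (hDf : AdmitsFlow E D d) :
    IsFlow E D d (ind (A D)) :=
  (hA D hD hDf).1.1

lemma cost_le (hA : GoodA E d w A) (hD : D ⊆ E) (hDf : AdmitsFlow E D d) {g : V × V → ℝ}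
    (hg : IsFlow E D d g) :
    flowCost E w (ind (A D)) ≤ flowCost E w g :=
  (hA D hD hDf).1.2 g hg

lemma subset (hA : GoodA E d w A) (hD : D ⊆ E) (hDf : AdmitsFlow E D d) : A D ⊆ D :=
    fun x hx => by
  by_contra hxD
  simpa [ind, hx] using (hA.isFlow hD hDf).2.1 x hxD

lemma aEq_of_subset (hA : GoodA E d w A) (hD : D ⊆ E) (hDf : AdmitsFlow E D d) (h1 : A D ⊆ D')
    (h2 : D' ⊆ D) :
    AEq E d A D' D := by
  have hflow : IsFlow E D' d (ind (A D)) :=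
    ⟨(hA.isFlow hD hDf).1, fun x hx => if_neg fun h => hx (h1 h), (hA.isFlow hD hDf).2.2⟩
  have hD'f : AdmitsFlow E D' d := ⟨_, hflow⟩
  have hmin : IsMinCostFlow E D' d w (ind (A D)) :=
    ⟨hflow, fun g hg => hA.cost_le hD hDf (hg.mono h2)⟩
  exact ⟨hD'f, hDf, ind_injective ((hA D' (h2.trans hD) hD'f).2 _ hmin).symm⟩

lemma not_aEq_of_mem (hA : GoodA E d w A) (hD' : D' ⊆ E) (hx : x ∈ A D) (hx' : x ∉ D') :
    ¬ AEq E d A D D' :=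
  fun h => hx' (hA.subset hD' h.2.1 (h.2.2 ▸ hx))

lemma not_mem_and_drev_mem (hA : GoodA E d w A) (hE : ∀ x, x ∈ E ↔ drev x ∈ E)
    (hw : ∀ x ∈ E, 0 < w x) (hD : D ⊆ E) (hDf : AdmitsFlow E D d) (he : e ∈ E) (hne : drev e ≠ e) :
    ¬ (e ∈ A D ∧ drev e ∈ A D) := by
  rintro ⟨h1, h2⟩
  have he' := (hE e).1 he
  have hcancel := (hA.isFlow hD hDf).sub_smul_ind_pair hE (if_pos h1) (if_pos h2)
  have hle := hA.cost_le hD hDf (hcancel.mono sdiff_subset)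
  rw [flowCost_sub_smul_ind_pair he he' hne] at hle
  linarith [hw e he, hw _ he']

/-- If not, `A (D + e)` uses `drev e` (if it avoided the pair it would be the optimum on `D`
and on `D ∪ {e}` alike) while `A (D ∪ {e})` uses `e`; the average of the two carries half a
unit around the 2-cycle, and cancelling it leaves a flow on `D` cheaper than `A D`. -/
lemma mem_A_padd (hA : GoodA E d w A) (hE : ∀ x, x ∈ E ↔ drev x ∈ E) (hw : ∀ x ∈ E, 0 < w x)
    (hD : D ⊆ E) (hDf : AdmitsFlow E D d) (he : e ∈ E) (hne : drev e ≠ e)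
    (heD : e ∉ D) (heD' : drev e ∉ D) (hchange : ¬ AEq E d A D (insert e D)) :
    e ∈ A (padd D e) := by
  have he' := (hE e).1 he
  have hDD1 : D ⊆ insert e D := subset_insert _ _
  have hD1D3 : insert e D ⊆ padd D e := insert_subset_padd (.inl rfl)
  have hD1 : insert e D ⊆ E := insert_subset he hD
  have hD3 : padd D e ⊆ E := padd_subset hD he he'
  have hD1f := hDf.mono hDD1
  have hD3f := hD1f.mono hD1D3
  have heA1 : e ∈ A (insert e D) := by
    by_contra h
    exact hchange (hA.aEq_of_subset hD1 hD1f ((subset_insert_iff_of_notMem h).1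
      (hA.subset hD1 hD1f)) hDD1)
  have hreA1 : drev e ∉ A (insert e D) := fun h => by
    rcases mem_insert.1 (hA.subset hD1 hD1f h) with h | h
    exacts [hne h, heD' h]
  by_contra heA3
  have hreA3 : drev e ∈ A (padd D e) := by
    by_contra h
    have hsub : A (padd D e) ⊆ D := by
      have := (hA.subset hD3 hD3f).trans padd_eq_insert_insert.subset
      rwa [subset_insert_iff_of_notMem heA3, subset_insert_iff_of_notMem h] at this
    exact hchange ((hA.aEq_of_subset hD3 hD3f hsub (hDD1.trans hD1D3)).trans
      (hA.aEq_of_subset hD3 hD3f (hsub.trans hDD1) hD1D3).symm)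
  have havg := ((hA.isFlow hD1 hD1f).mono hD1D3).midpoint (hA.isFlow hD3 hD3f)
  have hcancel := havg.sub_smul_ind_pair hE (e := e) (t := 1 / 2)
    (by simp [ind, heA1, heA3]) (by simp [ind, hreA1, hreA3])
  rw [psub_padd, psub_eq_self heD heD'] at hcancel
  have hle := hA.cost_le hD hDf hcancel
  rw [flowCost_sub_smul_ind_pair he he' hne, flowCost_smul, flowCost_add] at hle
  have h1 := hA.cost_le hD1 hD1f ((hA.isFlow hD hDf).mono hDD1)
  have h3 := hA.cost_le hD3 hD3f ((hA.isFlow hD hDf).mono (hDD1.trans hD1D3))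
  linarith [hw e he, hw _ he']

/-- `A (D + e)` avoids one edge `x` of the pair, so it is also the optimum on `D ∪ {drev x}`. -/
lemma aEq_padd (hA : GoodA E d w A) (hE : ∀ x, x ∈ E ↔ drev x ∈ E) (hw : ∀ x ∈ E, 0 < w x)
    (hD : D ⊆ E) (hDf : AdmitsFlow E D d) (he : e ∈ E) (hne : drev e ≠ e)
    (h1 : AEq E d A D (insert e D)) (h2 : AEq E d A D (insert (drev e) D)) :
    AEq E d A D (padd D e) := by
  have hD3 : padd D e ⊆ E := padd_subset hD he ((hE e).1 he)
  have hD3f : AdmitsFlow E (padd D e) d := hDf.mono subset_union_left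
  have hsub := (hA.subset hD3 hD3f).trans padd_eq_insert_insert.subset
  by_cases heA : e ∈ A (padd D e)
  · have hreA : drev e ∉ A (padd D e) := fun h =>
      hA.not_mem_and_drev_mem hE hw hD3 hD3f he hne ⟨heA, h⟩
    rw [insert_comm, subset_insert_iff_of_notMem hreA] at hsub
    exact h1.trans (hA.aEq_of_subset hD3 hD3f hsub (insert_subset_padd (.inl rfl)))
  · rw [subset_insert_iff_of_notMem heA] at hsub
    exact h2.trans (hA.aEq_of_subset hD3 hD3f hsub (insert_subset_padd (.inr rfl)))

end GoodA

end MinCostFlows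

section Maps

variable {V : Type*} [Fintype V] [DecidableEq V] {E E' D : Finset (V × V)} {d : V → ℤ}
  {w : V × V → ℝ} {A : Finset (V × V) → Finset (V × V)} {e : V × V}

lemma phiE_of_not_aEq (h : ¬ AEq E d A D (oplus D e)) :
    phiE E d A E' e D = oplus D (drev e) := by
  rw [phiE, if_pos h]

lemma phiE_of_aEq_of_not_aEq (h1 : AEq E d A D (oplus D e))
    (h2 : ¬ AEq E d A D (oplus D (drev e))) : phiE E d A E' e D = oplus D e := by
  rw [phiE, if_neg (not_not.2 h1), if_pos h2]

lemma phiE_of_aEq_of_aEq_of_mem (h1 : AEq E d A D (oplus D e))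
    (h2 : AEq E d A D (oplus D (drev e))) (he : e ∈ D) :
    phiE E d A E' e D = oplus D (chi E' e) := by
  rw [phiE, if_neg (not_not.2 h1), if_neg (not_not.2 h2), if_pos he]

lemma phiE_of_aEq_of_aEq_of_notMem (h1 : AEq E d A D (oplus D e))
    (h2 : AEq E d A D (oplus D (drev e))) (he : e ∉ D) :
    phiE E d A E' e D = oplus D (drev (chi E' e)) := by
  rw [phiE, if_neg (not_not.2 h1), if_neg (not_not.2 h2), if_neg he]

lemma psiE_eq_padd (h1 : AEq E d A D (padd D e)) (h2 : AEq E d A D (psub D e) → chi E' e ∈ D) :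
    psiE E d A E' e D = padd D e := by
  by_cases h : AEq E d A D (psub D e)
  · rw [psiE, if_neg (not_not.2 h1), if_neg (not_not.2 h), if_pos (h2 h)]
  · rw [psiE, if_neg (not_not.2 h1), if_pos h]

lemma psiE_eq_psub (h : AEq E d A D (padd D e) → AEq E d A D (psub D e) ∧ chi E' e ∉ D) :
    psiE E d A E' e D = psub D e := by
  by_cases h1 : AEq E d A D (padd D e)
  · rw [psiE, if_neg (not_not.2 h1), if_neg (not_not.2 (h h1).1), if_neg (h h1).2]
  · rw [psiE, if_pos h1]

end Maps

section Involution

variable {V : Type*} [Fintype V] [DecidableEq V] {E E' D : Finset (V × V)} {d : V → ℤ}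
  {w : V × V → ℝ} {A : Finset (V × V) → Finset (V × V)} {e : V × V}

/-- If `A D` uses an edge of the pair, `φ_e` deletes the other one and `ψ_e` puts it back, as
`A` still uses that edge; in the tie `φ_e` deletes `drev (χ e)`, and `ψ_e` restores it because
`χ e` is still present. -/
lemma psiE_phiE_of_mem_of_mem (hA : GoodA E d w A) (hE : ∀ x, x ∈ E ↔ drev x ∈ E)
    (hw : ∀ x ∈ E, 0 < w x) (hD : D ⊆ E) (hDf : AdmitsFlow E D d) (he : e ∈ E)
    (hne : drev e ≠ e) (heD : e ∈ D) (heD' : drev e ∈ D) :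
    psiE E d A E' e (phiE E d A E' e D) = D := by
  have hkeep : ∀ y, y ∉ A D → AEq E d A (D.erase y) D := fun y hy =>
    hA.aEq_of_subset hD hDf (subset_erase.2 ⟨hA.subset hD hDf, hy⟩) (erase_subset _ _)
  have hdrop : ∀ y, y ∈ A D → ¬ AEq E d A D (D.erase y) := fun y hy =>
    hA.not_aEq_of_mem ((erase_subset _ _).trans hD) hy (notMem_erase _ _)
  have hoplus : oplus D (drev e) = D.erase e := by rw [oplus_of_mem heD', drev_drev]
  have hψ : ∀ y, (y = e ∨ y = drev e) → y ∉ A D →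
      (AEq E d A (D.erase y) (psub D e) → chi E' e ∈ D.erase y) →
      psiE E d A E' e (D.erase y) = D := fun y hy hyA h => by
    rw [psiE_eq_padd (by rw [padd_erase hy, padd_eq_self heD heD']; exact hkeep y hyA)
      (by rwa [psub_erase hy]), padd_erase hy, padd_eq_self heD heD']
  have hused : ∀ x y, (x = e ∨ x = drev e) → x ∈ A D → y ∉ A D →
      ¬ AEq E d A (D.erase y) (psub D e) := fun x y hx hxA hyA h =>
    hA.not_aEq_of_mem (sdiff_subset.trans hD) hxA
      (by rcases hx with rfl | rfl <;> simp) ((hkeep y hyA).symm.trans h)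
  by_cases h1 : e ∈ A D
  · have h2 : drev e ∉ A D := fun h2 => hA.not_mem_and_drev_mem hE hw hD hDf he hne ⟨h1, h2⟩
    rw [phiE_of_aEq_of_not_aEq (oplus_of_mem heD ▸ (hkeep _ h2).symm) (hoplus ▸ hdrop e h1),
      oplus_of_mem heD]
    exact hψ _ (.inr rfl) h2 fun h => (hused e _ (.inl rfl) h1 h2 h).elim
  by_cases h2 : drev e ∈ A D
  · rw [phiE_of_not_aEq (oplus_of_mem heD ▸ hdrop _ h2), hoplus]
    exact hψ _ (.inl rfl) h1 fun h => (hused (drev e) _ (.inr rfl) h2 h1 h).elim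
  obtain ⟨y, hy, hchi⟩ := exists_chi_eq_drev E' e
  have hyA : y ∉ A D := by rcases hy with rfl | rfl <;> assumption
  have hdrevy : drev y ∈ D.erase y := by
    rcases hy with rfl | rfl
    exacts [mem_erase.2 ⟨hne, heD'⟩, mem_erase.2 ⟨hne.symm, heD⟩]
  rw [phiE_of_aEq_of_aEq_of_mem (oplus_of_mem heD ▸ (hkeep _ h2).symm)
    (hoplus ▸ (hkeep _ h1).symm) heD, hchi, oplus_of_mem (mem_of_mem_erase hdrevy), drev_drev]
  exact hψ y hy hyA fun _ => hchi ▸ hdrevy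

/-- If adding one edge of the pair changes the optimum, `φ_e` adds the other one, and `ψ_e`
removes it again since `A (D + e)` uses the first (`mem_A_padd`); in the tie `φ_e` adds
`drev (χ e)`, and `ψ_e` removes it because `χ e` is absent. -/
lemma psiE_phiE_of_notMem_of_notMem (hA : GoodA E d w A) (hE : ∀ x, x ∈ E ↔ drev x ∈ E)
    (hw : ∀ x ∈ E, 0 < w x) (hD : D ⊆ E) (hDf : AdmitsFlow E D d) (he : e ∈ E)
    (hne : drev e ≠ e) (heD : e ∉ D) (heD' : drev e ∉ D) :
    psiE E d A E' e (phiE E d A E' e D) = D := by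
  have he' := (hE e).1 he
  have hoplus : ∀ x, (x = e ∨ x = drev e) → oplus D x = insert x D := by
    rintro x (rfl | rfl)
    exacts [oplus_of_notMem heD' hne, oplus_of_notMem heD hne.symm]
  have hψ : ∀ x, (x = e ∨ x = drev e) →
      (AEq E d A (insert x D) (padd D e) → AEq E d A (insert x D) D ∧ chi E' e ∉ insert x D) →
      psiE E d A E' e (insert x D) = D := fun x hx h => by
    rw [psiE_eq_psub (by rwa [padd_insert hx, psub_insert hx, psub_eq_self heD heD']),
      psub_insert hx, psub_eq_self heD heD']
  have hnotin : ∀ x, (x = e ∨ x = drev e) → drev x ∉ insert x D := by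
    rintro x (rfl | rfl) <;> simp [hne, hne.symm, heD, heD']
  by_cases h1 : AEq E d A D (insert e D)
  · by_cases h2 : AEq E d A D (insert (drev e) D)
    · obtain ⟨y, hy, hchi⟩ := exists_chi_eq_drev E' e
      rw [phiE_of_aEq_of_aEq_of_notMem (hoplus e (.inl rfl) ▸ h1) (hoplus _ (.inr rfl) ▸ h2)
        heD, hchi, drev_drev, hoplus y hy]
      refine hψ y hy fun _ => ⟨?_, hchi ▸ hnotin y hy⟩
      rcases hy with rfl | rfl
      exacts [h1.symm, h2.symm]
    · have hkey := hA.mem_A_padd hE hw hD hDf he' hne.symm heD' heD h2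
      rw [padd_drev] at hkey
      rw [phiE_of_aEq_of_not_aEq (hoplus e (.inl rfl) ▸ h1) (hoplus _ (.inr rfl) ▸ h2),
        hoplus e (.inl rfl)]
      exact hψ e (.inl rfl) fun h =>
        (hA.not_aEq_of_mem (insert_subset he hD) hkey (hnotin e (.inl rfl)) h.symm).elim
  · have hkey := hA.mem_A_padd hE hw hD hDf he hne heD heD' h1
    rw [phiE_of_not_aEq (hoplus e (.inl rfl) ▸ h1), hoplus _ (.inr rfl)]
    exact hψ _ (.inr rfl) fun h =>
      (hA.not_aEq_of_mem (insert_subset he' hD) hkey (hnotin _ (.inr rfl)) h.symm).elim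

end Involution

theorem psiE_phiE_of_not_one_general
    {V : Type*} [Fintype V] [DecidableEq V]
    (E : Finset (V × V)) (hE_symm : ∀ e, e ∈ E ↔ drev e ∈ E)
    (hE_ne : ∀ e ∈ E, e.1 ≠ e.2)
    (d : V → ℤ)
    (w : V × V → ℝ) (hw : ∀ e ∈ E, 0 < w e)
    (A : Finset (V × V) → Finset (V × V)) (hA : GoodA E d w A)
    (E' : Finset (V × V))
    (D : Finset (V × V)) (hD : D ⊆ E) (hDf : AdmitsFlow E D d)
    (e : V × V) (he : e ∈ E)
    (hDe : e ∈ D ↔ drev e ∈ D) :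
    psiE E d A E' e (phiE E d A E' e D) = D := by
  have hne := drev_ne_self (hE_ne e he)
  by_cases heD : e ∈ D
  · exact psiE_phiE_of_mem_of_mem hA hE_symm hw hD hDf he hne heD (hDe.1 heD)
  · exact psiE_phiE_of_notMem_of_notMem hA hE_symm hw hD hDf he hne heD (mt hDe.2 heD)

theorem psiE_phiE_of_not_one
    {V : Type*} [Fintype V] [DecidableEq V]
    (E : Finset (V × V)) (hE_symm : ∀ e, e ∈ E ↔ drev e ∈ E)
    (hE_ne : ∀ e ∈ E, e.1 ≠ e.2)
    (d : V → ℤ) (hd : ∑ u : V, d u = 0)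
    (w : V × V → ℝ) (hw : ∀ e ∈ E, 0 < w e)
    (A : Finset (V × V) → Finset (V × V)) (hA : GoodA E d w A)
    (E' : Finset (V × V)) (hE' : IsOrientation E E')
    (D : Finset (V × V)) (hD : D ⊆ E) (hDf : AdmitsFlow E D d)
    (e : V × V) (he : e ∈ E)
    (hDe : e ∈ D ↔ drev e ∈ D) :
    psiE E d A E' e (phiE E d A E' e D) = D :=
  psiE_phiE_of_not_one_general E hE_symm hE_ne d w hw A hA E' D hD hDf e he hDe
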